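/- arXiv:2208.10443 — 2 statements merged into one kernel-verified Lean document; each statement's English description precedes it below -/
import Mathlib

section
/- Let N ≥ 1 and let A be an N×N complex matrix with singular value decomposition A = U Σ V*, where U and V are unitary N×N matrices with columns u₁,…,u_N and v₁,…,v_N respectively, and Σ = diag(σ₁,…,σ_N) with σ₁ ≥ σ₂ ≥ … ≥ σ_N ≥ 0. Let ε > 0, let b ∈ ℂ^N, and let x ∈ ℂ^N satisfy A x = b. Let 1 ≤ n ≤ N, and suppose real perturbations δσ₁,…,δσ_n satisfy |δσᵢ| ≤ ε σ₁ and σᵢ + δσᵢ > 3 ε σ₁ for each i = 1,…,n, and δb ∈ ℂⁿ satisfies ‖δb‖₂ ≤ ε(1+ε)‖b‖₂. Define the computed truncated-SVD solution x̂ = Σ_{i=1}^{n} ((uᵢ* b + δbᵢ)/(σᵢ + δσᵢ)) vᵢ. Then ‖x̂‖₂ ≤ (7/3)(1+ε)‖x‖₂. -/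
/-!
With `w = V* x`, the exact coefficients are `uᵢ* b = σᵢ wᵢ`, and since the columns `vᵢ` are
orthonormal, `‖x̂‖` is the `ℓ²` norm of the coefficient vector
`((σᵢ wᵢ + δbᵢ) / (σᵢ + δσᵢ))ᵢ`. As `3 |δσᵢ| ≤ 3 ε σ₁ < σᵢ + δσᵢ`, each ratio
`σᵢ / (σᵢ + δσᵢ)` is at most `4/3`, so by Bessel's inequality the exact part has norm at most
`(4/3) ‖x‖`. The perturbation part has norm at most
`‖δb‖ / (3 ε σ₁) ≤ (1 + ε) ‖b‖ / (3 σ₁) ≤ (1 + ε) ‖x‖ / 3`, because `‖b‖ ≤ ‖A‖₂ ‖x‖ = σ₁ ‖x‖`.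
Finally `4/3 + (1 + ε)/3 ≤ (7/3)(1 + ε)`.
-/

open scoped InnerProductSpace ComplexConjugate Matrix

section

variable {𝕜 ι : Type*} [RCLike 𝕜] [Fintype ι]

theorem EuclideanSpace.norm_le_mul_of_forall_norm_apply_le {y z : EuclideanSpace 𝕜 ι} {c : ℝ}
    (hc : 0 ≤ c) (h : ∀ i, ‖y i‖ ≤ c * ‖z i‖) : ‖y‖ ≤ c * ‖z‖ := by
  rw [EuclideanSpace.norm_eq, EuclideanSpace.norm_eq, ← Real.sqrt_sq hc,
    ← Real.sqrt_mul (sq_nonneg c), Finset.mul_sum]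
  gcongr with i
  rw [← mul_pow]
  gcongr
  exact h i

theorem EuclideanSpace.norm_toLp_div_le {d : ι → ℝ} {t : ℝ} (ht : 0 < t) (hd : ∀ i, t ≤ d i)
    (y : EuclideanSpace 𝕜 ι) :
    ‖(WithLp.toLp 2 fun i => y i / (d i : 𝕜) : EuclideanSpace 𝕜 ι)‖ ≤ ‖y‖ / t := by
  rw [div_eq_inv_mul]
  refine norm_le_mul_of_forall_norm_apply_le (by positivity) fun i => ?_
  rw [norm_div, RCLike.norm_ofReal, abs_of_pos (ht.trans_le (hd i)), div_eq_inv_mul]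
  gcongr
  exact hd i

theorem EuclideanSpace.norm_toLp_mul_div_add_le {σ δ : ι → ℝ} (hσ : ∀ i, 0 ≤ σ i)
    (h : ∀ i, 3 * |δ i| < σ i + δ i) (w : EuclideanSpace 𝕜 ι) :
    ‖(WithLp.toLp 2 fun i => (σ i : 𝕜) * w i / ((σ i + δ i : ℝ) : 𝕜) : EuclideanSpace 𝕜 ι)‖ ≤
      4 / 3 * ‖w‖ := by
  refine norm_le_mul_of_forall_norm_apply_le (by norm_num) fun i => ?_
  have hpos : 0 < σ i + δ i := (by positivity : (0 : ℝ) ≤ 3 * |δ i|).trans_lt (h i)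
  have hratio : σ i / (σ i + δ i) ≤ 4 / 3 := by
    rw [div_le_iff₀ hpos]
    linarith [neg_abs_le (δ i), h i]
  rw [norm_div, norm_mul, RCLike.norm_ofReal, RCLike.norm_ofReal, abs_of_nonneg (hσ i),
    abs_of_pos hpos, mul_div_right_comm]
  gcongr

section InnerProductSpace

variable {E : Type*} [NormedAddCommGroup E] [InnerProductSpace 𝕜 E]

theorem Orthonormal.norm_sum_smul {v : ι → E} (hv : Orthonormal 𝕜 v) (c : EuclideanSpace 𝕜 ι) :
    ‖∑ i, c i • v i‖ = ‖c‖ := by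
  rw [norm_eq_sqrt_re_inner (𝕜 := 𝕜), hv.inner_sum, EuclideanSpace.norm_eq]
  simp_rw [RCLike.conj_mul, ← RCLike.ofReal_pow, ← map_sum, RCLike.ofReal_re]

theorem Orthonormal.norm_toLp_inner_le {v : ι → E} (hv : Orthonormal 𝕜 v) (x : E) :
    ‖(WithLp.toLp 2 fun i => ⟪v i, x⟫_𝕜 : EuclideanSpace 𝕜 ι)‖ ≤ ‖x‖ := by
  rw [EuclideanSpace.norm_eq, Real.sqrt_le_left (norm_nonneg x)]
  exact hv.sum_inner_products_le x

theorem Orthonormal.norm_sum_perturbed_smul_le {v : ι → E} (hv : Orthonormal 𝕜 v) {σ δ : ι → ℝ}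
    {t : ℝ} (hσ : ∀ i, 0 ≤ σ i) (ht : 0 < t) (hδ : ∀ i, 3 * |δ i| ≤ t)
    (hσδ : ∀ i, t < σ i + δ i) (x : E) (e : EuclideanSpace 𝕜 ι) :
    ‖∑ i, (((σ i : 𝕜) * ⟪v i, x⟫_𝕜 + e i) / ((σ i + δ i : ℝ) : 𝕜)) • v i‖ ≤
      4 / 3 * ‖x‖ + ‖e‖ / t := by
  let w : EuclideanSpace 𝕜 ι := WithLp.toLp 2 fun i => ⟪v i, x⟫_𝕜
  let c₁ : EuclideanSpace 𝕜 ι := WithLp.toLp 2 fun i => (σ i : 𝕜) * w i / ((σ i + δ i : ℝ) : 𝕜)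
  let c₂ : EuclideanSpace 𝕜 ι := WithLp.toLp 2 fun i => e i / ((σ i + δ i : ℝ) : 𝕜)
  have hc₁ : ‖c₁‖ ≤ 4 / 3 * ‖x‖ :=
    (EuclideanSpace.norm_toLp_mul_div_add_le hσ (fun i => (hδ i).trans_lt (hσδ i)) w).trans
      (by gcongr; exact hv.norm_toLp_inner_le x)
  have hc₂ : ‖c₂‖ ≤ ‖e‖ / t := EuclideanSpace.norm_toLp_div_le ht (fun i => (hσδ i).le) e
  calc ‖∑ i, (((σ i : 𝕜) * ⟪v i, x⟫_𝕜 + e i) / ((σ i + δ i : ℝ) : 𝕜)) • v i‖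
      = ‖c₁ + c₂‖ := by simp_rw [add_div]; exact hv.norm_sum_smul (c₁ + c₂)
    _ ≤ 4 / 3 * ‖x‖ + ‖e‖ / t := (norm_add_le _ _).trans (add_le_add hc₁ hc₂)

end InnerProductSpace

theorem Matrix.inner_toLp_col (M : Matrix ι ι 𝕜) (i : ι) (y : EuclideanSpace 𝕜 ι) :
    ⟪(WithLp.toLp 2 fun j => M j i : EuclideanSpace 𝕜 ι), y⟫_𝕜 = ∑ j, conj (M j i) * y j := by
  simp [PiLp.inner_apply, mul_comm]

theorem Matrix.inner_toLp_col_eq_conjTranspose_mulVec (M : Matrix ι ι 𝕜) (i : ι)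
    (y : EuclideanSpace 𝕜 ι) :
    ⟪(WithLp.toLp 2 fun j => M j i : EuclideanSpace 𝕜 ι), y⟫_𝕜 = (Mᴴ *ᵥ y.ofLp) i := by
  simp [Matrix.inner_toLp_col, Matrix.mulVec, dotProduct]

theorem Matrix.orthonormal_toLp_col_of_mem_unitaryGroup [DecidableEq ι] {U : Matrix ι ι 𝕜}
    (hU : U ∈ Matrix.unitaryGroup ι 𝕜) :
    Orthonormal 𝕜 fun i => (WithLp.toLp 2 fun j => U j i : EuclideanSpace 𝕜 ι) := by
  rw [orthonormal_iff_ite]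
  intro i j
  rw [Matrix.inner_toLp_col, ← Matrix.one_apply, ← Unitary.star_mul_self_of_mem hU]
  simp [Matrix.mul_apply]

theorem Matrix.inner_toLp_col_toEuclideanCLM_of_mem_unitaryGroup [DecidableEq ι]
    {U : Matrix ι ι 𝕜} (hU : U ∈ Matrix.unitaryGroup ι 𝕜) (d : ι → 𝕜) (V : Matrix ι ι 𝕜)
    (x : EuclideanSpace 𝕜 ι) (i : ι) :
    ⟪(WithLp.toLp 2 fun j => U j i : EuclideanSpace 𝕜 ι),
        Matrix.toEuclideanCLM (𝕜 := 𝕜) (U * Matrix.diagonal d * Vᴴ) x⟫_𝕜 =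
      d i * ⟪(WithLp.toLp 2 fun j => V j i : EuclideanSpace 𝕜 ι), x⟫_𝕜 := by
  rw [inner_toLp_col_eq_conjTranspose_mulVec, inner_toLp_col_eq_conjTranspose_mulVec,
    Matrix.ofLp_toEuclideanCLM, Matrix.mulVec_mulVec, Matrix.mul_assoc, ← Matrix.mul_assoc Uᴴ,
    ← Matrix.star_eq_conjTranspose, Unitary.star_mul_self_of_mem hU, Matrix.one_mul,
    ← Matrix.mulVec_mulVec, Matrix.mulVec_diagonal]

open scoped Matrix.Norms.L2Operator in
theorem Matrix.norm_toEuclideanCLM_unitary_mul_diagonal_mul_le [DecidableEq ι]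
    {U V : Matrix ι ι 𝕜} (hU : U ∈ Matrix.unitaryGroup ι 𝕜) (hV : V ∈ Matrix.unitaryGroup ι 𝕜)
    (d : ι → 𝕜) (x : EuclideanSpace 𝕜 ι) :
    ‖Matrix.toEuclideanCLM (𝕜 := 𝕜) (U * Matrix.diagonal d * Vᴴ) x‖ ≤ ‖d‖ * ‖x‖ :=
  calc ‖Matrix.toEuclideanCLM (𝕜 := 𝕜) (U * Matrix.diagonal d * Vᴴ) x‖
      ≤ ‖U * Matrix.diagonal d * Vᴴ‖ * ‖x‖ := (Matrix.toEuclideanCLM (𝕜 := 𝕜) _).le_opNorm x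
    _ = ‖d‖ * ‖x‖ := by
      rw [← Matrix.star_eq_conjTranspose, CStarRing.norm_mul_mem_unitary _ (Unitary.star_mem hV),
        CStarRing.norm_mem_unitary_mul _ hU, Matrix.l2_opNorm_diagonal]

end

/-- **Norm bound for the truncated-SVD solution.**
Let `A = U Σ V*` be an SVD of the `N × N` complex matrix `A`, with `U, V` unitary and
`Σ = diag (σ₁ ≥ σ₂ ≥ ⋯ ≥ σ_N ≥ 0)`.  Suppose `A x = b`, and let `1 ≤ n ≤ N`.  Suppose the
perturbations `δσᵢ` of the retained singular values satisfy `|δσᵢ| ≤ ε σ₁` and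
`σᵢ + δσᵢ > 3 ε σ₁` for `i = 1, …, n`, and that `δb ∈ ℂⁿ` satisfies
`‖δb‖₂ ≤ ε (1+ε) ‖b‖₂`.  Then the computed truncated-SVD solution
`xhat = ∑_{i=1}^{n} ((uᵢ* b + δbᵢ)/(σᵢ + δσᵢ)) vᵢ` satisfies
`‖xhat‖₂ ≤ (7/3) (1+ε) ‖x‖₂`. -/
theorem truncated_svd_solution_norm_bound
    (N n : ℕ) (hN : 0 < N) (hn : 1 ≤ n) (hnN : n ≤ N)
    (A U V : Matrix (Fin N) (Fin N) ℂ)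
    (hU : U ∈ Matrix.unitaryGroup (Fin N) ℂ)
    (hV : V ∈ Matrix.unitaryGroup (Fin N) ℂ)
    (σ : Fin N → ℝ)
    (hσ_anti : ∀ i j : Fin N, i ≤ j → σ j ≤ σ i)
    (hσ_nonneg : ∀ i : Fin N, 0 ≤ σ i)
    (hSVD : A = U * Matrix.diagonal (fun i => (σ i : ℂ)) * V.conjTranspose)
    (ε : ℝ) (hε : 0 < ε)
    (b x : EuclideanSpace ℂ (Fin N))
    (hx : Matrix.toEuclideanCLM (𝕜 := ℂ) A x = b)
    (δσ : Fin n → ℝ)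
    (hδσ_small : ∀ i : Fin n, |δσ i| ≤ ε * σ ⟨0, hN⟩)
    (hδσ_big : ∀ i : Fin n, σ (Fin.castLE hnN i) + δσ i > 3 * ε * σ ⟨0, hN⟩)
    (δb : EuclideanSpace ℂ (Fin n))
    (hδb : ‖δb‖ ≤ ε * (1 + ε) * ‖b‖)
    (xhat : EuclideanSpace ℂ (Fin N))
    (hxhat : xhat = ∑ i : Fin n,
      ((((∑ j : Fin N, (starRingEnd ℂ) (U j (Fin.castLE hnN i)) * b j) + δb i)
          / ((σ (Fin.castLE hnN i) + δσ i : ℝ) : ℂ)) •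
        (show EuclideanSpace ℂ (Fin N) from WithLp.toLp 2 (fun j => V j (Fin.castLE hnN i))))) :
    ‖xhat‖ ≤ 7 / 3 * (1 + ε) * ‖x‖ := by
  set s := σ ⟨0, hN⟩
  have hσ_le : ∀ i, σ i ≤ s := fun i => hσ_anti _ i (Nat.zero_le _)
  have hs : 0 < s := by
    have i₀ : Fin n := ⟨0, hn⟩
    nlinarith [hδσ_big i₀, hσ_le (Fin.castLE hnN i₀), hδσ_small i₀, le_abs_self (δσ i₀),
      abs_nonneg (δσ i₀)]
  have hb : ‖b‖ ≤ s * ‖x‖ := by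
    rw [← hx, hSVD]
    refine (Matrix.norm_toEuclideanCLM_unitary_mul_diagonal_mul_le hU hV _ x).trans ?_
    gcongr
    refine (pi_norm_le_iff_of_nonneg hs.le).2 fun i => ?_
    simpa [abs_of_nonneg (hσ_nonneg i)] using hσ_le i
  set v : Fin n → EuclideanSpace ℂ (Fin N) := fun i =>
    WithLp.toLp 2 fun j => V j (Fin.castLE hnN i)
  have hv : Orthonormal ℂ v := (Matrix.orthonormal_toLp_col_of_mem_unitaryGroup hV).comp
    (Fin.castLE hnN) (Fin.castLE_injective hnN)
  have hcoeff (i : Fin n) : ∑ j, (starRingEnd ℂ) (U j (Fin.castLE hnN i)) * b j =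
      σ (Fin.castLE hnN i) * ⟪v i, x⟫_ℂ := by
    rw [← Matrix.inner_toLp_col, ← hx, hSVD,
      Matrix.inner_toLp_col_toEuclideanCLM_of_mem_unitaryGroup hU]
  calc ‖xhat‖ ≤ 4 / 3 * ‖x‖ + ‖δb‖ / (3 * ε * s) := by
        simp_rw [hxhat, hcoeff]
        exact hv.norm_sum_perturbed_smul_le (fun i => hσ_nonneg _) (by positivity)
          (fun i => by linarith [hδσ_small i]) (fun i => hδσ_big i) x δb
    _ ≤ 4 / 3 * ‖x‖ + ε * (1 + ε) * (s * ‖x‖) / (3 * ε * s) := by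
        gcongr; exact hδb.trans (by gcongr)
    _ = (5 + ε) / 3 * ‖x‖ := by field_simp; ring
    _ ≤ 7 / 3 * (1 + ε) * ‖x‖ := by gcongr; linarith
end

section
/- Let N ≥ 0 and let P ∈ ℝ[X,Y] be a polynomial in two variables of total degree at most N. Then there exists a polynomial Q ∈ ℝ[X,Y] of total degree at most N + 2 such that ∂²Q/∂X² + ∂²Q/∂Y² = P, where the partial derivatives are formal partial derivatives of polynomials. -/
/-!
Since `Δ(x^(a+2) y^b) = (a+2)(a+1) x^a y^b + b(b-1) x^(a+2) y^(b-2)`, the monomial `x^a y^b` is,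
up to the unit `(a+2)(a+1)`, the Laplacian of a polynomial of degree `a + b + 2` minus a multiple
of a monomial of the same degree with a smaller power of `y`. Strong induction on `b` thus puts
every monomial of degree at most `N` in the image under `Δ` of the polynomials of degree at most
`N + 2`; this image is a submodule, and these monomials span the polynomials of degree at most `N`.
-/

open MvPolynomial

namespace MvPolynomial

variable {R : Type*} [CommRing R]

noncomputable def laplacian : MvPolynomial (Fin 2) R →ₗ[R] MvPolynomial (Fin 2) R :=
  (pderiv 0).toLinearMap ∘ₗ (pderiv 0).toLinearMap +
    (pderiv 1).toLinearMap ∘ₗ (pderiv 1).toLinearMap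

theorem laplacian_apply (p : MvPolynomial (Fin 2) R) :
    laplacian p = pderiv 0 (pderiv 0 p) + pderiv 1 (pderiv 1 p) := rfl

-- For `b < 2` the exponent `b - 2` is truncated, but then its coefficient `b * (b - 1)` vanishes.
theorem laplacian_X_pow_mul_X_pow (a b : ℕ) :
    laplacian (X 0 ^ (a + 2) * X 1 ^ b : MvPolynomial (Fin 2) R) =
      ((a + 2) * (a + 1)) • (X 0 ^ a * X 1 ^ b) +
        (b * (b - 1)) • (X 0 ^ (a + 2) * X 1 ^ (b - 2)) := by
  simp only [laplacian_apply, Derivation.leibniz, Derivation.leibniz_pow, pderiv_X, ne_eq,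
    one_ne_zero, not_false_eq_true, Pi.single_eq_of_ne, smul_eq_mul, mul_zero, Nat.add_one_sub_one,
    Pi.single_eq_same, mul_one, nsmul_eq_mul, zero_add, add_tsub_cancel_right,
    Derivation.map_natCast, add_zero, zero_ne_one, Nat.sub_sub, Nat.cast_mul]
  ring

theorem totalDegree_X_pow_le {σ : Type*} (i : σ) (n : ℕ) :
    (X i ^ n : MvPolynomial σ R).totalDegree ≤ n := by
  rw [X_pow_eq_monomial]
  exact (totalDegree_monomial_le _ _).trans_eq (Finsupp.sum_single_index rfl)

theorem totalDegree_X_pow_mul_X_pow_le (a b : ℕ) :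
    (X 0 ^ a * X 1 ^ b : MvPolynomial (Fin 2) R).totalDegree ≤ a + b :=
  (totalDegree_mul _ _).trans (add_le_add (totalDegree_X_pow_le _ _) (totalDegree_X_pow_le _ _))

theorem monomial_one_eq_X_pow_mul_X_pow (m : Fin 2 →₀ ℕ) :
    monomial m (1 : R) = X 0 ^ m 0 * X 1 ^ m 1 := by
  rw [monomial_eq, C_1, one_mul, Finsupp.prod_fintype _ _ fun _ => pow_zero _, Fin.prod_univ_two]

variable [Algebra ℚ R]

theorem X_pow_mul_X_pow_mem_map_laplacian {N a b : ℕ} (h : a + b ≤ N) :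
    (X 0 ^ a * X 1 ^ b : MvPolynomial (Fin 2) R) ∈
      (restrictTotalDegree (Fin 2) R (N + 2)).map laplacian := by
  induction b using Nat.strong_induction_on generalizing a with
  | _ b ih =>
  set W := (restrictTotalDegree (Fin 2) R (N + 2)).map laplacian
  have hsum : ((a + 2) * (a + 1)) • (X 0 ^ a * X 1 ^ b) +
      (b * (b - 1)) • (X 0 ^ (a + 2) * X 1 ^ (b - 2)) ∈ W :=
    laplacian_X_pow_mul_X_pow (R := R) a b ▸ Submodule.mem_map_of_mem
      ((mem_restrictTotalDegree _ _ _).2 <| (totalDegree_X_pow_mul_X_pow_le _ _).trans (by omega))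
  have hlower : (b * (b - 1)) • (X 0 ^ (a + 2) * X 1 ^ (b - 2)) ∈ W := by
    rcases lt_or_ge b 2 with hb | hb
    · interval_cases b <;> simp
    · exact W.smul_of_tower_mem _ (ih _ (by omega) (by omega))
  have hunit : IsUnit (((a + 2) * (a + 1) : ℕ) : R) := by
    simpa only [map_natCast] using
      (Nat.cast_ne_zero.2 (by positivity : (a + 2) * (a + 1) ≠ 0)).isUnit.map (algebraMap ℚ R)
  rwa [W.add_mem_iff_left hlower, ← Nat.cast_smul_eq_nsmul R,
    W.smul_mem_iff_of_isUnit hunit] at hsum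

theorem restrictTotalDegree_le_map_laplacian (N : ℕ) :
    restrictTotalDegree (Fin 2) R N ≤ (restrictTotalDegree (Fin 2) R (N + 2)).map laplacian := by
  rw [restrictTotalDegree, restrictSupport_eq_span, Submodule.span_le]
  rintro _ ⟨m, hm, rfl⟩
  simp only [SetLike.mem_coe, monomial_one_eq_X_pow_mul_X_pow]
  exact X_pow_mul_X_pow_mem_map_laplacian (by simpa [Finsupp.sum_fintype] using hm)

end MvPolynomial

/-- **Existence of a polynomial anti-Laplacian of degree `N + 2`.**
Every polynomial `P ∈ ℝ[X,Y]` of total degree at most `N` admits an anti-Laplacian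
`Q ∈ ℝ[X,Y]` of total degree at most `N + 2`, i.e. `∂²Q/∂X² + ∂²Q/∂Y² = P`, where the
partial derivatives are formal partial derivatives of polynomials. -/
theorem exists_polynomial_antiLaplacian
    (N : ℕ) (P : MvPolynomial (Fin 2) ℝ) (hP : P.totalDegree ≤ N) :
    ∃ Q : MvPolynomial (Fin 2) ℝ, Q.totalDegree ≤ N + 2 ∧
      pderiv (0 : Fin 2) (pderiv (0 : Fin 2) Q)
        + pderiv (1 : Fin 2) (pderiv (1 : Fin 2) Q) = P := by
  obtain ⟨Q, hQ, hΔQ⟩ :=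
    restrictTotalDegree_le_map_laplacian N ((mem_restrictTotalDegree _ _ _).2 hP)
  exact ⟨Q, (mem_restrictTotalDegree _ _ _).1 hQ, hΔQ⟩
end
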